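/- Let E be a Riesz space with weak order unit e and F a Dedekind complete Riesz space. For every net (μ_α) in ba(C_e,F) and μ ∈ ba(C_e,F), one has μ_α ↑ μ in ba(C_e,F) if and only if μ_α(p) ↑ μ(p) in F for every p ∈ C_e. In particular, ba(C_e,F) is a Dedekind complete Riesz space. -/

import Mathlib

open scoped Classical

noncomputable section

namespace RieszPaper

universe u v w

/-! ### Basic Riesz space notions -/

section BasicDefs

variable {E : Type u} [Lattice E] [AddCommGroup E]

/-- The positive part `x ⊔ 0`. -/
def rpos (x : E) : E := x ⊔ 0

/-- The set of components of `e`, i.e. elements `p` with `p ⊓ (e - p) = 0`. -/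
def Comp (e : E) : Set E := {p | p ⊓ (e - p) = 0}

/-- Disjoint complement of a set. -/
def disjC (S : Set E) : Set E := {x | ∀ y ∈ S, |x| ⊓ |y| = 0}

/-- The principal band generated by `f` (as double disjoint complement). -/
def pBand (f : E) : Set E := disjC (disjC {f})

/-- `e` is a weak order unit: `e > 0` and the band generated by `e` is all of `E`. -/
def IsWeakUnit (e : E) : Prop := 0 < e ∧ ∀ x : E, 0 ≤ x → x ⊓ e = 0 → x = 0

/-- The chain `x ⊓ n•|f|`, whose supremum is the band projection of `x ≥ 0`
onto the band generated by `f`. -/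
def projChain (f x : E) : Set E := {y | ∃ n : ℕ, y = x ⊓ n • |f|}

/-- Band projection of a positive element onto the band generated by `f`. -/
def projP (f x : E) : E := if h : ∃ s, IsLUB (projChain f x) s then h.choose else 0

/-- Band projection onto the principal band generated by `f`. -/
def proj (f x : E) : E := projP f (rpos x) - projP f (rpos (-x))

/-- The principal projection property. -/
def HasPPP (α : Type u) [Lattice α] [AddCommGroup α] : Prop :=
  ∀ f x : α, 0 ≤ x → ∃ s, IsLUB (projChain f x) s

/-- A subset is sequentially order closed. -/
def SeqOrderClosed (D : Set E) : Prop :=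
  (∀ (x : ℕ → E) (l : E), (∀ n, x n ∈ D) → Monotone x → IsLUB (Set.range x) l → l ∈ D) ∧
  (∀ (x : ℕ → E) (l : E), (∀ n, x n ∈ D) → Antitone x → IsGLB (Set.range x) l → l ∈ D)

end BasicDefs

/-! ### Charges on components -/

section Charges

variable {E : Type u} [Lattice E] [AddCommGroup E]
variable {F : Type v} [Lattice F] [AddCommGroup F]

/-- `μ` is an `F`-valued signed charge on the components of `e`. -/
def IsChargeOn (e : E) (μ : E → F) : Prop :=
  μ 0 = 0 ∧ ∀ p q : E, p ∈ Comp e → q ∈ Comp e → p ⊓ q = 0 → μ (p + q) = μ p + μ q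

/-- `μ` is order bounded on the components of `e`. -/
def OrdBddOn (e : E) (μ : E → F) : Prop :=
  ∃ g : F, 0 ≤ g ∧ ∀ p ∈ Comp e, |μ p| ≤ g

/-- `ba(C_e, F)`: order bounded signed `F`-valued charges on the components of `e`. -/
def baSet (e : E) : Set (E → F) := {μ | IsChargeOn e μ ∧ OrdBddOn e μ}

/-- The order on charges: `μ ≤ ν` iff `ν - μ` is positive on components. -/
def baLe (e : E) (μ ν : E → F) : Prop := ∀ p ∈ Comp e, μ p ≤ ν p

/-- `η` is the least upper bound of `S ⊆ ba(C_e,F)` within `ba(C_e,F)`. -/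
def IsLUBba (e : E) (S : Set (E → F)) (η : E → F) : Prop :=
  η ∈ baSet e ∧ (∀ μ ∈ S, baLe e μ η) ∧
    ∀ ξ ∈ baSet e, (∀ μ ∈ S, baLe e μ ξ) → baLe e η ξ

/-- `η` is the greatest lower bound of `S ⊆ ba(C_e,F)` within `ba(C_e,F)`. -/
def IsGLBba (e : E) (S : Set (E → F)) (η : E → F) : Prop :=
  η ∈ baSet e ∧ (∀ μ ∈ S, baLe e η μ) ∧
    ∀ ξ ∈ baSet e, (∀ μ ∈ S, baLe e ξ μ) → baLe e ξ η

end Charges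

section ChargesCCL

variable {E : Type u} [Lattice E] [AddCommGroup E]
variable {F : Type v} [ConditionallyCompleteLattice F] [AddCommGroup F]

/-- Pointwise formula for the supremum of two charges. -/
def chSupAt (e : E) (μ ν : E → F) (p : E) : F :=
  sSup {v | ∃ q, q ∈ Comp e ∧ q ≤ p ∧ v = μ q + ν (p - q)}

/-- Pointwise formula for the infimum of two charges. -/
def chInfAt (e : E) (μ ν : E → F) (p : E) : F :=
  sInf {v | ∃ q, q ∈ Comp e ∧ q ≤ p ∧ v = μ q + ν (p - q)}

/-- The modulus of a charge, via the Riesz–Kantorovich-type formula. -/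
def chargeAbs (e : E) (μ : E → F) : E → F :=
  fun p => sSup {v | ∃ q, q ∈ Comp e ∧ q ≤ p ∧ v = μ q - μ (p - q)}

/-- The positive part of a charge. -/
def chargePos (e : E) (μ : E → F) : E → F :=
  fun p => sSup {v | ∃ q, q ∈ Comp e ∧ q ≤ p ∧ v = μ q}

/-- The negative part of a charge. -/
def chargeNeg (e : E) (μ : E → F) : E → F :=
  fun p => sSup {v | ∃ q, q ∈ Comp e ∧ q ≤ p ∧ v = -(μ q)}

end ChargesCCL

/-! ### Operators -/

section Ops

variable {E : Type u} [Lattice E] [AddCommGroup E] [Module ℝ E]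

def PosOn (Lp : Set E) (φ : E → E) : Prop := ∀ f ∈ Lp, 0 ≤ f → 0 ≤ φ f

def AddOn (Lp : Set E) (φ : E → E) : Prop :=
  ∀ f g : E, f ∈ Lp → g ∈ Lp → φ (f + g) = φ f + φ g

def SmulOn (Lp : Set E) (φ : E → E) : Prop :=
  ∀ (r : ℝ) (f : E), f ∈ Lp → φ (r • f) = r • φ f

/-- `φ` is a regular operator on `Lp`: a difference of two positive linear maps. -/
def RegularOn (Lp : Set E) (φ : E → E) : Prop :=
  ∃ ψ₁ ψ₂ : E → E, AddOn Lp ψ₁ ∧ AddOn Lp ψ₂ ∧ SmulOn Lp ψ₁ ∧ SmulOn Lp ψ₂ ∧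
    PosOn Lp ψ₁ ∧ PosOn Lp ψ₂ ∧ ∀ f ∈ Lp, φ f = ψ₁ f - ψ₂ f

/-- Uniform convergence of a sequence with regulator `u`. -/
def UnifConv (u : E) (s : ℕ → E) (f : E) : Prop :=
  ∃ ε : ℕ → ℝ, Antitone ε ∧ Filter.Tendsto ε Filter.atTop (nhds 0) ∧
    ∀ n, |f - s n| ≤ ε n • u

end Ops

/-! ### Conditional expectation operators -/

section CondExp

variable {E : Type u} [ConditionallyCompleteLattice E] [AddCommGroup E] [Module ℝ E]

/-- `(E, e, T)` is a conditional Riesz triple: `e` is a weak order unit and `T` is a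
strictly positive conditional expectation operator with `T e = e` whose range is a
Dedekind complete Riesz subspace. -/
structure IsCondTriple (e : E) (T : E →ₗ[ℝ] E) : Prop where
  weakUnit : IsWeakUnit e
  pos : ∀ x : E, 0 ≤ x → 0 ≤ T x
  strictPos : ∀ x : E, 0 < x → 0 < T x
  ordCont : ∀ (A : Set E) (s : E), A.Nonempty → DirectedOn (· ≤ ·) A →
    IsLUB A s → IsLUB (T '' A) (T s)
  idem : ∀ x : E, T (T x) = T x
  unitFix : T e = e
  rangeSupClosed : ∀ x y : E, x ∈ Set.range T → y ∈ Set.range T → x ⊔ y ∈ Set.range T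
  rangeDedekind : ∀ A : Set E, A ⊆ Set.range T → A.Nonempty → BddAbove A →
    sSup A ∈ Set.range T

end CondExp

/-! ### Universal completion and T-universal completeness -/

section Univ

variable {E : Type u} {G : Type v}
variable [ConditionallyCompleteLattice E] [AddCommGroup E] [Module ℝ E]
variable [ConditionallyCompleteLattice G] [AddCommGroup G] [Module ℝ G]

/-- `j : E → G` realizes `G` as a universal completion of `E`. -/
structure IsUnivCompletion (j : E →ₗ[ℝ] G) : Prop where
  bipos : ∀ x : E, 0 ≤ j x ↔ 0 ≤ x
  latHom : ∀ x y : E, j (x ⊔ y) = j x ⊔ j y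
  dense : ∀ z : G, 0 < z → ∃ x : E, 0 < j x ∧ j x ≤ z
  univComplete : ∀ S : Set G, (∀ x ∈ S, 0 ≤ x) →
    S.Pairwise (fun a b => a ⊓ b = 0) → BddAbove S

/-- `E` is `T`-universally complete (relative to the universal completion `j : E → G`):
every nonempty upwards directed subset `A ⊆ E` such that `j[T[A]]` is bounded above in
`G` has a supremum in `E`. -/
def TUnivComplete (T : E →ₗ[ℝ] E) (j : E →ₗ[ℝ] G) : Prop :=
  ∀ A : Set E, A.Nonempty → DirectedOn (· ≤ ·) A →
    BddAbove (⇑j '' (⇑T '' A)) → BddAbove A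

end Univ

/-- `mul` is a commutative `f`-algebra multiplication with unit `u`. -/
structure IsFAlgebraMul {G : Type v} [Lattice G] [AddCommGroup G] [Module ℝ G]
    (u : G) (mul : G → G → G) : Prop where
  comm : ∀ x y, mul x y = mul y x
  assoc : ∀ x y z, mul (mul x y) z = mul x (mul y z)
  add_left : ∀ x y z, mul (x + y) z = mul x z + mul y z
  smul_left : ∀ (r : ℝ) (x y), mul (r • x) y = r • mul x y
  one_mul : ∀ x, mul u x = x
  mul_nonneg : ∀ x y, 0 ≤ x → 0 ≤ y → 0 ≤ mul x y
  disj : ∀ x y z, x ⊓ y = 0 → 0 ≤ z → mul x z ⊓ y = 0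

/-! ### Bundled T-universally complete conditional Riesz triples -/

/-- A `T`-universally complete conditional Riesz triple `(E, e, T)`, together with a
universal completion `j : E → G` carrying its `f`-algebra multiplication (with unit
`j e`).  Since `E = L¹(T)` is an `R(T)`-module, products of elements of `L^∞(T)` with
elements of `E` again lie in `E` (`mulClosed`). -/
structure CRT (E : Type u) (G : Type v)
    [ConditionallyCompleteLattice E] [AddCommGroup E] [Module ℝ E]
    [CovariantClass E E (· + ·) (· ≤ ·)] [PosSMulMono ℝ E]
    [ConditionallyCompleteLattice G] [AddCommGroup G] [Module ℝ G]
    [CovariantClass G G (· + ·) (· ≤ ·)] [PosSMulMono ℝ G] where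
  e : E
  T : E →ₗ[ℝ] E
  j : E →ₗ[ℝ] G
  mul : G → G → G
  triple : IsCondTriple e T
  compl : IsUnivCompletion j
  falg : IsFAlgebraMul (j e) mul
  tuc : TUnivComplete T j
  mulClosed : ∀ f g : E, (∃ h : E, h ∈ Set.range T ∧ 0 ≤ h ∧ |f| ≤ h) →
    mul (j f) (j g) ∈ Set.range ⇑j

namespace CRT

variable {E : Type u} {G : Type v}
variable [ConditionallyCompleteLattice E] [AddCommGroup E] [Module ℝ E]
  [CovariantClass E E (· + ·) (· ≤ ·)] [PosSMulMono ℝ E]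
variable [ConditionallyCompleteLattice G] [AddCommGroup G] [Module ℝ G]
  [CovariantClass G G (· + ·) (· ≤ ·)] [PosSMulMono ℝ G]
variable (C : CRT E G)

/-- The range `R(T)`. -/
def R : Set E := Set.range ⇑C.T

/-- The product `g · f` of two elements of `E = L¹(T)`, computed in the universal
completion (meaningful whenever the product lies again in `E`, e.g. for
`g ∈ R(T)` or `g ∈ L^∞(T)`). -/
def sm (g f : E) : E := @Function.invFun E G ⟨0⟩ (⇑C.j) (C.mul (C.j g) (C.j f))

/-- `L^∞(T) = {f : |f| ≤ g for some g ∈ R(T)₊}`. -/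
def Linf : Set E := {f | ∃ h ∈ C.R, 0 ≤ h ∧ |f| ≤ h}

/-- The `R(T)`-valued norm `‖f‖_{T,1} = T |f|`. -/
def nrm1 (f : E) : E := C.T |f|

/-- The `R(T)`-valued norm `‖f‖_{T,∞} = inf {α ∈ R(T)₊ : |f| ≤ α}`. -/
def nrmInf (f : E) : E := sInf {a | a ∈ C.R ∧ 0 ≤ a ∧ |f| ≤ a}

/-- Order bounded signed `R(T)`-valued charges on the components of `u`. -/
def baR (u : E) : Set (E → E) :=
  {μ | IsChargeOn u μ ∧ (∀ p ∈ Comp u, μ p ∈ C.R) ∧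
     ∃ g ∈ C.R, 0 ≤ g ∧ ∀ p ∈ Comp u, |μ p| ≤ g}

/-- `ba(T)`: the `T`-absolutely continuous charges in `ba(C_e, R(T))`. -/
def baT : Set (E → E) :=
  {μ | μ ∈ C.baR C.e ∧ ∀ p ∈ Comp C.e, μ p ∈ pBand (C.T p)}

/-- `x = ∑ αᵢ pᵢ` is a standard representation of the `e`-step function `x` with
`R(T)`-coefficients. -/
def IsStdRep (x : E) (n : ℕ) (α p : Fin n → E) : Prop :=
  (∀ i, α i ∈ C.R) ∧ (∀ i, p i ∈ Comp C.e) ∧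
  (∀ i j, i ≠ j → p i ⊓ p j = 0) ∧ (∑ i, p i) = C.e ∧
  x = ∑ i, C.sm (α i) (p i)

/-- `S_e(T)`: the `e`-step functions with `R(T)`-coefficients. -/
def Steps : Set E := {x | ∃ (n : ℕ) (α p : Fin n → E), C.IsStdRep x n α p}

/-- The integral `I_μ` of a step function: `I_μ (∑ αᵢ pᵢ) = ∑ αᵢ μ(pᵢ)`. -/
def Imu (μ : E → E) (x : E) : E :=
  @Classical.epsilon E ⟨0⟩ fun v =>
    ∃ (n : ℕ) (α p : Fin n → E), C.IsStdRep x n α p ∧ v = ∑ i, C.sm (α i) (μ (p i))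

/-- The integral of a positive element of `L^∞(T)` with respect to a positive charge. -/
def intPos (μ : E → E) (f : E) : E :=
  sSup {v | ∃ g ∈ C.Steps, 0 ≤ g ∧ g ≤ f ∧ v = C.Imu μ g}

/-- The integral `∫ f dμ = ∫ f⁺ dμ⁺ − ∫ f⁻ dμ⁺ − ∫ f⁺ dμ⁻ + ∫ f⁻ dμ⁻`. -/
def integral (μ : E → E) (f : E) : E :=
  C.intPos (chargePos C.e μ) (rpos f) - C.intPos (chargePos C.e μ) (rpos (-f))
    - C.intPos (chargeNeg C.e μ) (rpos f) + C.intPos (chargeNeg C.e μ) (rpos (-f))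

/-- Membership in `L^r(Lp, R(T))`: regular linear operators with values in `R(T)`. -/
structure MemLr (Lp : Set E) (φ : E → E) : Prop where
  add : AddOn Lp φ
  smul : SmulOn Lp φ
  mem : ∀ f ∈ Lp, φ f ∈ C.R
  regular : RegularOn Lp φ

/-- Membership in the `T`-strong dual of `(Lp, nrm)`: `R(T)`-linear, regular,
`nrm`-bounded maps into `R(T)`. -/
structure MemDual (Lp : Set E) (nrm : E → E) (φ : E → E) : Prop where
  add : AddOn Lp φ
  smul : SmulOn Lp φ
  modHom : ∀ g f : E, g ∈ C.R → f ∈ Lp → φ (C.sm g f) = C.sm g (φ f)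
  mem : ∀ f ∈ Lp, φ f ∈ C.R
  regular : RegularOn Lp φ
  bdd : ∃ k ∈ C.R, 0 ≤ k ∧ ∀ f ∈ Lp, |φ f| ≤ C.sm k (nrm f)

/-- The `R(T)`-valued norm on the `T`-strong dual. -/
def dualNorm (Lp : Set E) (nrm : E → E) (φ : E → E) : E :=
  sInf {g | g ∈ C.R ∧ 0 ≤ g ∧ ∀ f ∈ Lp, |φ f| ≤ C.sm g (nrm f)}

/-- `|φ| ≤ |ψ|` in `L^r(Lp, R(T))`, via the Riesz–Kantorovich formula. -/
def OpAbsLe (Lp : Set E) (φ ψ : E → E) : Prop :=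
  ∀ f ∈ Lp, 0 ≤ f → ∀ g ∈ Lp, |g| ≤ f →
    |φ g| ≤ sSup {v | ∃ h, h ∈ Lp ∧ |h| ≤ f ∧ v = |ψ h|}

/-- The canonical partial inverse of `h` in `R(T)`: the element `g` of the band
generated by `|h|` with `h g = P_{|h|} e`. -/
def pinv (h : E) : E :=
  @Classical.epsilon E ⟨0⟩ fun g =>
    g ∈ C.R ∧ g ∈ pBand (|h|) ∧ C.sm h g = proj (|h|) C.e

end CRT

/-! ### Bundled Dedekind complete Riesz spaces, for existential statements -/

structure BRiesz : Type (u + 1) where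
  carrier : Type u
  [ccl : ConditionallyCompleteLattice carrier]
  [grp : AddCommGroup carrier]
  [mod : Module ℝ carrier]
  [cov : CovariantClass carrier carrier (· + ·) (· ≤ ·)]
  [psm : PosSMulMono ℝ carrier]

attribute [instance] BRiesz.ccl BRiesz.grp BRiesz.mod BRiesz.cov BRiesz.psm

/-- `(F, ẽ, T̃)` together with `i : E → F` is a `T`-universal completion of `(E, e, T)`. -/
structure IsTUnivCompletion
    {E : Type u} [ConditionallyCompleteLattice E] [AddCommGroup E] [Module ℝ E]
    {F : Type v} [ConditionallyCompleteLattice F] [AddCommGroup F] [Module ℝ F]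
    (e : E) (T : E →ₗ[ℝ] E) (e' : F) (T' : F →ₗ[ℝ] F) (i : E →ₗ[ℝ] F) : Prop where
  triple : IsCondTriple e' T'
  tuniv : ∃ (U : BRiesz.{v}) (j : F →ₗ[ℝ] U.carrier),
    IsUnivCompletion j ∧ TUnivComplete T' j
  bipos : ∀ x : E, 0 ≤ i x ↔ 0 ≤ x
  latHom : ∀ x y : E, i (x ⊔ y) = i x ⊔ i y
  dense : ∀ z : F, 0 < z → ∃ x : E, 0 < i x ∧ i x ≤ z
  unit : i e = e'
  comm : ∀ x : E, T' (i x) = i (T x)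


/-! ### Powers via functional calculus, for the spaces `L^p(T)` -/

/-- A `T`-universally complete conditional Riesz triple together with the power
functions `x ↦ x^p` (`x ≥ 0`, `p > 0`) of the functional calculus on the universal
completion. -/
structure CRTP (E : Type u) (G : Type v)
    [ConditionallyCompleteLattice E] [AddCommGroup E] [Module ℝ E]
    [CovariantClass E E (· + ·) (· ≤ ·)] [PosSMulMono ℝ E]
    [ConditionallyCompleteLattice G] [AddCommGroup G] [Module ℝ G]
    [CovariantClass G G (· + ·) (· ≤ ·)] [PosSMulMono ℝ G]
    extends CRT E G where
  epow : G → ℝ → G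
  epow_one : ∀ x : G, 0 ≤ x → epow x 1 = x
  epow_nonneg : ∀ (x : G) (p : ℝ), 0 ≤ x → 0 < p → 0 ≤ epow x p
  epow_mono : ∀ (x y : G) (p : ℝ), 0 ≤ x → x ≤ y → 0 < p → epow x p ≤ epow y p
  epow_unit : ∀ p : ℝ, 0 < p → epow (toCRT.j toCRT.e) p = toCRT.j toCRT.e
  epow_exp_mul : ∀ (x : G) (p q : ℝ), 0 ≤ x → 0 < p → 0 < q →
    epow (epow x p) q = epow x (p * q)
  epow_mul : ∀ (x y : G) (p : ℝ), 0 ≤ x → 0 ≤ y → 0 < p →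
    epow (toCRT.mul x y) p = toCRT.mul (epow x p) (epow y p)
  epow_succ : ∀ (x : G) (n : ℕ), 0 ≤ x → 0 < n →
    epow x ((n : ℝ) + 1) = toCRT.mul (epow x (n : ℝ)) x
  epow_sup : ∀ (x y : G) (p : ℝ), 0 ≤ x → 0 ≤ y → 0 < p →
    epow (x ⊔ y) p = epow x p ⊔ epow y p
  epow_rangeT : ∀ (x : E) (p : ℝ), 0 ≤ x → 0 < p → x ∈ Set.range ⇑toCRT.T →
    epow (toCRT.j x) p ∈ ⇑toCRT.j '' Set.range ⇑toCRT.T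

namespace CRTP

variable {E : Type u} {G : Type v}
variable [ConditionallyCompleteLattice E] [AddCommGroup E] [Module ℝ E]
  [CovariantClass E E (· + ·) (· ≤ ·)] [PosSMulMono ℝ E]
variable [ConditionallyCompleteLattice G] [AddCommGroup G] [Module ℝ G]
  [CovariantClass G G (· + ·) (· ≤ ·)] [PosSMulMono ℝ G]
variable (C : CRTP E G)

/-- the `p`-th power of `x ∈ E`, computed in the universal completion. -/
def powE (x : E) (p : ℝ) : E :=
  @Function.invFun E G ⟨0⟩ (⇑C.toCRT.j) (C.epow (C.toCRT.j x) p)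

/-- `L^p(T) = {f ∈ L¹(T) : |f|^p ∈ L¹(T)}` for `p ∈ [1, ∞)`. -/
def LpSet (p : ℝ) : Set E := {f | C.epow (C.toCRT.j |f|) p ∈ Set.range ⇑C.toCRT.j}

/-- The `R(T)`-valued norm `‖f‖_{T,p} = (T |f|^p)^{1/p}`. -/
def nrmP (p : ℝ) (f : E) : E := C.powE (C.toCRT.T (C.powE |f| p)) (1 / p)

end CRTP

/-! A supremum in `ba(C_e,F)` of an increasing net is computed pointwise: the pointwise
supremum is again a charge because, along a directed index set, the supremum of a sum of
increasing nets is the sum of their suprema.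

For Dedekind completeness, the supremum of a bounded set `S` of charges is
`p ↦ sup ∑ᵢ μᵢ(qᵢ)`, taken over decompositions of `p` into finitely many disjoint
components `qᵢ` and over `μᵢ ∈ S`. Intersecting a decomposition of `p₁ + p₂` with `p₁` and
with `p₂` shows that the sums available at `p₁ + p₂` are exactly the sums of those at `p₁`
and at `p₂`, which makes this supremum additive. -/

open Set
open scoped Pointwise

section LatticeOrderedGroup

variable {E : Type*} [Lattice E] [AddCommGroup E]

lemma nonneg_of_inf_eq_zero {a b : E} (h : a ⊓ b = 0) : 0 ≤ a ∧ 0 ≤ b :=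
  ⟨h ▸ inf_le_left, h ▸ inf_le_right⟩

lemma inf_eq_zero_of_le {a b a' b' : E} (ha' : 0 ≤ a') (ha : a' ≤ a) (hb' : 0 ≤ b')
    (hb : b' ≤ b) (h : a ⊓ b = 0) : a' ⊓ b' = 0 :=
  le_antisymm (h ▸ inf_le_inf ha hb) (le_inf ha' hb')

lemma inf_inf_inf_eq_zero {a b c : E} (h : a ⊓ b = 0) (hc : 0 ≤ c) : a ⊓ c ⊓ (b ⊓ c) = 0 :=
  inf_eq_zero_of_le (le_inf (nonneg_of_inf_eq_zero h).1 hc) inf_le_left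
    (le_inf (nonneg_of_inf_eq_zero h).2 hc) inf_le_left h

lemma Comp.nonneg {e p : E} (hp : p ∈ Comp e) : 0 ≤ p := (nonneg_of_inf_eq_zero hp).1

lemma Comp.sub_nonneg {e p : E} (hp : p ∈ Comp e) : 0 ≤ e - p :=
  (nonneg_of_inf_eq_zero hp).2

variable [AddLeftMono E]

lemma add_eq_sup_of_inf_eq_zero {a b : E} (h : a ⊓ b = 0) : a + b = a ⊔ b := by
  rw [← inf_add_sup a b, h, zero_add]

lemma add_inf_eq_of_inf_eq_zero {a b c : E} (h : a ⊓ b = 0) (hc : 0 ≤ c) :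
    (a + b) ⊓ c = a ⊓ c + b ⊓ c := by
  let := AddCommGroup.toDistribLattice E
  rw [add_eq_sup_of_inf_eq_zero h, add_eq_sup_of_inf_eq_zero (inf_inf_inf_eq_zero h hc),
    inf_sup_right]

lemma inf_add_inf_of_le_add {p q r : E} (hpq : p ⊓ q = 0) (hr : 0 ≤ r) (h : r ≤ p + q) :
    r ⊓ p + r ⊓ q = r := by
  rw [inf_comm r p, inf_comm r q, ← add_inf_eq_of_inf_eq_zero hpq hr, inf_eq_right.2 h]

lemma Comp.inf_mem {e p q : E} (hp : p ∈ Comp e) (hq : q ∈ Comp e) : p ⊓ q ∈ Comp e := by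
  let := AddCommGroup.toDistribLattice E
  have hpq : 0 ≤ p ⊓ q := le_inf (Comp.nonneg hp) (Comp.nonneg hq)
  change p ⊓ q ⊓ (e - p ⊓ q) = 0
  rw [sub_inf, inf_sup_left,
    inf_eq_zero_of_le hpq inf_le_left (Comp.sub_nonneg hp) le_rfl hp,
    inf_eq_zero_of_le hpq inf_le_right (Comp.sub_nonneg hq) le_rfl hq, sup_idem]

lemma Comp.add_mem {e p q : E} (hp : p ∈ Comp e) (hq : q ∈ Comp e) (hpq : p ⊓ q = 0) :
    p + q ∈ Comp e := by
  let := AddCommGroup.toDistribLattice E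
  have hpq' : 0 ≤ (e - p) ⊓ (e - q) := le_inf (Comp.sub_nonneg hp) (Comp.sub_nonneg hq)
  change (p + q) ⊓ (e - (p + q)) = 0
  rw [add_eq_sup_of_inf_eq_zero hpq, sub_sup, inf_sup_right,
    inf_eq_zero_of_le (Comp.nonneg hp) le_rfl hpq' inf_le_left hp,
    inf_eq_zero_of_le (Comp.nonneg hq) le_rfl hpq' inf_le_right hq, sup_idem]

end LatticeOrderedGroup

lemma abs_le_abs_sup_abs_of_le_of_le {F : Type*} [Lattice F] [AddCommGroup F] [AddLeftMono F]
    {a b c : F} (hab : a ≤ b) (hbc : b ≤ c) : |b| ≤ |a| ⊔ |c| :=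
  sup_le (hbc.trans le_sup_left |>.trans le_sup_right)
    ((neg_le_neg_iff.2 hab).trans le_sup_right |>.trans le_sup_left)

lemma OrdBddOn.of_le_of_le {E : Type*} [Lattice E] [AddCommGroup E]
    {F : Type*} [Lattice F] [AddCommGroup F] [AddLeftMono F] {e : E} {μ ν ξ : E → F}
    (hμ : OrdBddOn e μ) (hξ : OrdBddOn e ξ) (hμν : baLe e μ ν) (hνξ : baLe e ν ξ) :
    OrdBddOn e ν := by
  obtain ⟨g, hg, hμg⟩ := hμ
  obtain ⟨g', -, hξg⟩ := hξ
  exact ⟨g ⊔ g', le_sup_of_le_left hg, fun p hp =>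
    (abs_le_abs_sup_abs_of_le_of_le (hμν p hp) (hνξ p hp)).trans
      (sup_le_sup (hμg p hp) (hξg p hp))⟩

lemma isLUB_range_add_of_monotone {ι F : Type*} [Preorder ι] [IsDirected ι (· ≤ ·)]
    [Preorder F] [AddCommGroup F] [AddLeftMono F] {f g : ι → F} {a b : F}
    (hf : Monotone f) (hg : Monotone g) (ha : IsLUB (range f) a) (hb : IsLUB (range g) b) :
    IsLUB (range (f + g)) (a + b) := by
  have hab := ha.add hb
  refine ⟨forall_mem_range.2 fun i => hab.1 (add_mem_add (mem_range_self i) (mem_range_self i)),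
    fun c hc => hab.2 ?_⟩
  rintro _ ⟨_, ⟨i, rfl⟩, _, ⟨j, rfl⟩, rfl⟩
  obtain ⟨k, hik, hjk⟩ := directed_of (· ≤ ·) i j
  exact (add_le_add (hf hik) (hg hjk)).trans (hc (mem_range_self k))

section IncreasingNet

variable {E : Type*} [Lattice E] [AddCommGroup E]
  {F : Type*} [ConditionallyCompleteLattice F] [AddCommGroup F] [AddLeftMono F]
  {ι : Type*} [Preorder ι] [IsDirected ι (· ≤ ·)] [Nonempty ι] {e : E} {m : ι → E → F}

lemma isChargeOn_iSup (hm : ∀ a, IsChargeOn e (m a))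
    (hmono : ∀ a b, a ≤ b → baLe e (m a) (m b))
    (hbdd : ∀ p ∈ Comp e, BddAbove (range fun a => m a p)) :
    IsChargeOn e fun p => ⨆ a, m a p := by
  refine ⟨by simp only [fun a => (hm a).1, ciSup_const], fun p q hp hq hpq => ?_⟩
  simp only [fun a => (hm a).2 p q hp hq hpq]
  exact (isLUB_range_add_of_monotone (fun a b hab => hmono a b hab p hp)
    (fun a b hab => hmono a b hab q hq) (isLUB_ciSup (hbdd p hp))
    (isLUB_ciSup (hbdd q hq))).ciSup_eq

theorem isLUBba_range_iff (hm : ∀ a, m a ∈ baSet e)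
    (hmono : ∀ a b, a ≤ b → baLe e (m a) (m b)) {μ : E → F} (hμ : μ ∈ baSet e) :
    IsLUBba e (range m) μ ↔ ∀ p ∈ Comp e, IsLUB (range fun a => m a p) (μ p) := by
  constructor
  · intro hlub
    have hle_μ : ∀ a, baLe e (m a) μ := fun a => hlub.2.1 (m a) (mem_range_self a)
    have hbdd : ∀ p ∈ Comp e, BddAbove (range fun a => m a p) :=
      fun p hp => ⟨μ p, forall_mem_range.2 fun a => hle_μ a p hp⟩
    let ν : E → F := fun p => ⨆ a, m a p
    have hle_ν : ∀ a, baLe e (m a) ν := fun a p hp => le_ciSup (hbdd p hp) a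
    have hν : ν ∈ baSet e :=
      ⟨isChargeOn_iSup (fun a => (hm a).1) hmono hbdd,
        (hm (Classical.arbitrary ι)).2.of_le_of_le hμ.2 (hle_ν _)
          fun p hp => ciSup_le fun a => hle_μ a p hp⟩
    have hμν : baLe e μ ν := hlub.2.2 ν hν (forall_mem_range.2 hle_ν)
    exact fun p hp => ⟨forall_mem_range.2 fun a => hle_μ a p hp,
      fun c hc => (hμν p hp).trans (ciSup_le fun a => hc (mem_range_self a))⟩
  · exact fun h => ⟨hμ, forall_mem_range.2 fun a p hp => (h p hp).1 (mem_range_self a),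
      fun ξ _ hξ p hp => (h p hp).2 (forall_mem_range.2 fun a => hξ (m a) (mem_range_self a) p hp)⟩

end IncreasingNet

section DedekindComplete

variable {E : Type*} [Lattice E] [AddCommGroup E] {F : Type*} [AddCommGroup F]

/-- `MixedSum e S p v`: `v = ∑ᵢ μᵢ qᵢ` for a decomposition `p = ∑ᵢ qᵢ` into finitely many
pairwise disjoint components `qᵢ` of `e` and some `μᵢ ∈ S`. -/
inductive MixedSum (e : E) (S : Set (E → F)) : E → F → Prop
  | zero : MixedSum e S 0 0
  | single {μ : E → F} {p : E} : μ ∈ S → p ∈ Comp e → MixedSum e S p (μ p)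
  | add {p q : E} {v w : F} : p ∈ Comp e → q ∈ Comp e → p ⊓ q = 0 →
      MixedSum e S p v → MixedSum e S q w → MixedSum e S (p + q) (v + w)

variable {e : E} {S : Set (E → F)}

lemma MixedSum.le [Lattice F] [AddLeftMono F] {ξ : E → F} (hξ : IsChargeOn e ξ)
    (hSξ : ∀ μ ∈ S, baLe e μ ξ) {p : E} {v : F} (hv : MixedSum e S p v) : v ≤ ξ p := by
  induction hv with
  | zero => exact hξ.1.ge
  | single hμ hp => exact hSξ _ hμ _ hp
  | add hp hq hpq _ _ ihp ihq => exact (hξ.2 _ _ hp hq hpq).symm ▸ add_le_add ihp ihq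

variable [AddLeftMono E]

lemma MixedSum.exists_inf_add_inf (hS : ∀ μ ∈ S, IsChargeOn e μ) {p q r : E} {v : F}
    (hv : MixedSum e S r v) (hp : p ∈ Comp e) (hq : q ∈ Comp e) (hpq : p ⊓ q = 0)
    (hr : r ≤ p + q) :
    ∃ v₁ v₂, MixedSum e S (r ⊓ p) v₁ ∧ MixedSum e S (r ⊓ q) v₂ ∧ v = v₁ + v₂ := by
  induction hv with
  | zero =>
    refine ⟨0, 0, ?_, ?_, (add_zero 0).symm⟩
    · rw [inf_eq_left.2 (Comp.nonneg hp)]; exact .zero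
    · rw [inf_eq_left.2 (Comp.nonneg hq)]; exact .zero
  | @single μ r hμ hr' =>
    have hdisj : r ⊓ p ⊓ (r ⊓ q) = 0 := by
      rw [inf_comm r p, inf_comm r q]; exact inf_inf_inf_eq_zero hpq (Comp.nonneg hr')
    refine ⟨μ (r ⊓ p), μ (r ⊓ q), .single hμ (Comp.inf_mem hr' hp),
      .single hμ (Comp.inf_mem hr' hq), ?_⟩
    rw [← (hS μ hμ).2 _ _ (Comp.inf_mem hr' hp) (Comp.inf_mem hr' hq) hdisj,
      inf_add_inf_of_le_add hpq (Comp.nonneg hr') hr]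
  | @add r₁ r₂ _ _ hr₁ hr₂ h₁₂ _ _ ih₁ ih₂ =>
    obtain ⟨a₁, a₂, ha₁, ha₂, rfl⟩ :=
      ih₁ ((le_add_of_nonneg_right (Comp.nonneg hr₂)).trans hr)
    obtain ⟨b₁, b₂, hb₁, hb₂, rfl⟩ :=
      ih₂ ((le_add_of_nonneg_left (Comp.nonneg hr₁)).trans hr)
    refine ⟨a₁ + b₁, a₂ + b₂, ?_, ?_, add_add_add_comm _ _ _ _⟩
    · rw [add_inf_eq_of_inf_eq_zero h₁₂ (Comp.nonneg hp)]
      exact .add (Comp.inf_mem hr₁ hp) (Comp.inf_mem hr₂ hp)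
        (inf_inf_inf_eq_zero h₁₂ (Comp.nonneg hp)) ha₁ hb₁
    · rw [add_inf_eq_of_inf_eq_zero h₁₂ (Comp.nonneg hq)]
      exact .add (Comp.inf_mem hr₁ hq) (Comp.inf_mem hr₂ hq)
        (inf_inf_inf_eq_zero h₁₂ (Comp.nonneg hq)) ha₂ hb₂

lemma setOf_mixedSum_add (hS : ∀ μ ∈ S, IsChargeOn e μ) {p q : E} (hp : p ∈ Comp e)
    (hq : q ∈ Comp e) (hpq : p ⊓ q = 0) :
    {v | MixedSum e S (p + q) v} = {v | MixedSum e S p v} + {v | MixedSum e S q v} := by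
  refine Subset.antisymm (fun v hv => ?_) ?_
  · obtain ⟨v₁, v₂, hv₁, hv₂, rfl⟩ := hv.exists_inf_add_inf hS hp hq hpq le_rfl
    rw [inf_eq_right.2 (le_add_of_nonneg_right (Comp.nonneg hq))] at hv₁
    rw [inf_eq_right.2 (le_add_of_nonneg_left (Comp.nonneg hp))] at hv₂
    exact add_mem_add hv₁ hv₂
  · rintro _ ⟨v, hv, w, hw, rfl⟩
    exact .add hp hq hpq hv hw

end DedekindComplete

theorem exists_isLUBba {E : Type*} [Lattice E] [AddCommGroup E] [AddLeftMono E]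
    {F : Type*} [ConditionallyCompleteLattice F] [AddCommGroup F] [AddLeftMono F]
    {e : E} {S : Set (E → F)} (hS : S ⊆ baSet e) (hne : S.Nonempty)
    (hbdd : ∃ ξ ∈ baSet e, ∀ μ ∈ S, baLe e μ ξ) : ∃ η, IsLUBba e S η := by
  obtain ⟨μ₀, hμ₀⟩ := hne
  obtain ⟨ξ, hξ, hSξ⟩ := hbdd
  have hcharge : ∀ μ ∈ S, IsChargeOn e μ := fun μ hμ => (hS hμ).1
  let V : E → Set F := fun p => {v | MixedSum e S p v}
  have hV_ne : ∀ p ∈ Comp e, (V p).Nonempty := fun p hp => ⟨_, .single hμ₀ hp⟩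
  have hV_bdd : ∀ p, BddAbove (V p) := fun p => ⟨ξ p, fun _ hv => hv.le hξ.1 hSξ⟩
  refine ⟨fun p => sSup (V p), ⟨⟨?_, fun p q hp hq hpq => ?_⟩, ?_⟩, ?_, ?_⟩
  · exact IsGreatest.csSup_eq ⟨.zero, fun v hv => (hv.le hξ.1 hSξ).trans_eq hξ.1.1⟩
  · simp only [V, setOf_mixedSum_add hcharge hp hq hpq]
    exact csSup_add (hV_ne p hp) (hV_bdd p) (hV_ne q hq) (hV_bdd q)
  · exact (hS hμ₀).2.of_le_of_le hξ.2 (fun p hp => le_csSup (hV_bdd p) (.single hμ₀ hp))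
      fun p hp => csSup_le (hV_ne p hp) fun _ hv => hv.le hξ.1 hSξ
  · exact fun μ hμ p hp => le_csSup (hV_bdd p) (.single hμ hp)
  · exact fun ζ hζ hSζ p hp => csSup_le (hV_ne p hp) fun _ hv => hv.le hζ.1 hSζ

theorem ba_sup_pointwise_and_dedekind_complete_general
    {E : Type u} [Lattice E] [AddCommGroup E]
    [CovariantClass E E (· + ·) (· ≤ ·)]
    {F : Type v} [ConditionallyCompleteLattice F] [AddCommGroup F]
    [CovariantClass F F (· + ·) (· ≤ ·)]
    (e : E) :
    (∀ (ι : Type w) [Preorder ι] [Nonempty ι], IsDirected ι (· ≤ ·) →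
      ∀ m : ι → (E → F), (∀ a, m a ∈ baSet (F := F) e) →
        (∀ a b : ι, a ≤ b → baLe e (m a) (m b)) →
        ∀ μ ∈ baSet (F := F) e,
          (IsLUBba e (Set.range m) μ ↔
            ∀ p ∈ Comp e, IsLUB (Set.range fun a => m a p) (μ p))) ∧
    (∀ S : Set (E → F), S ⊆ baSet (F := F) e → S.Nonempty →
      (∃ ξ ∈ baSet (F := F) e, ∀ μ ∈ S, baLe e μ ξ) →
      ∃ η, IsLUBba e S η) :=
  ⟨fun _ _ _ _ _ hm hmono _ hμ => isLUBba_range_iff hm hmono hμ,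
    fun _ hS hne hbdd => exists_isLUBba hS hne hbdd⟩

/-- Let `E` be a Riesz space with weak order unit `e` and `F` a
Dedekind complete Riesz space.  For every increasing net `(μ_α)` in `ba(C_e,F)` and
`μ ∈ ba(C_e,F)` one has `μ_α ↑ μ` in `ba(C_e,F)` if and only if `μ_α(p) ↑ μ(p)` in `F`
for every component `p` of `e`.  In particular `ba(C_e,F)` is Dedekind complete. -/
theorem ba_sup_pointwise_and_dedekind_complete
    {E : Type u} [Lattice E] [AddCommGroup E] [Module ℝ E]
    [CovariantClass E E (· + ·) (· ≤ ·)] [PosSMulMono ℝ E]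
    {F : Type v} [ConditionallyCompleteLattice F] [AddCommGroup F] [Module ℝ F]
    [CovariantClass F F (· + ·) (· ≤ ·)] [PosSMulMono ℝ F]
    (e : E) (he : IsWeakUnit e) :
    (∀ (ι : Type w) [Preorder ι] [Nonempty ι], IsDirected ι (· ≤ ·) →
      ∀ m : ι → (E → F), (∀ a, m a ∈ baSet (F := F) e) →
        (∀ a b : ι, a ≤ b → baLe e (m a) (m b)) →
        ∀ μ ∈ baSet (F := F) e,
          (IsLUBba e (Set.range m) μ ↔
            ∀ p ∈ Comp e, IsLUB (Set.range fun a => m a p) (μ p))) ∧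
    (∀ S : Set (E → F), S ⊆ baSet (F := F) e → S.Nonempty →
      (∃ ξ ∈ baSet (F := F) e, ∀ μ ∈ S, baLe e μ ξ) →
      ∃ η, IsLUBba e S η) :=
  ba_sup_pointwise_and_dedekind_complete_general e

end RieszPaper

end
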